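/- Let w be an infinite non-ultimately periodic word and u ∈ Π_γ(w). If i ≤ j, w[i,j] is a palindrome, (m1,m2) is a u-run with i + |u| < m1 and m2 + |u| < j, (m3,m4) is its mirror in [i,j], k = min(m1, m3) and k̄ = i + j - k, then (k - |u|, k̄ + |u|) is a centered standard palindrome of w[i,j]. -/

import Mathlib

open scoped BigOperators

variable {α : Type*}

/-- The factor of the infinite word `w` (1-indexed) from position `i` to position `j`. -/
def Subword (w : ℕ → α) (i j : ℕ) : List α :=
  (List.range (j + 1 - i)).map fun n => w (i + n)

/-- `t` is a finite factor of the infinite word `w` (positions are 1-indexed). -/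
def IsFactorI (w : ℕ → α) (t : List α) : Prop :=
  ∃ i, 1 ≤ i ∧ t = (List.range t.length).map fun n => w (i + n)

/-- `t` occurs infinitely often in the infinite word `w`. -/
def RecurrentI (w : ℕ → α) (t : List α) : Prop :=
  ∀ N, ∃ i, N ≤ i ∧ t = (List.range t.length).map fun n => w (i + n)

/-- The infinite word `w` is ultimately periodic. -/
def UltimatelyPeriodic (w : ℕ → α) : Prop :=
  ∃ p N, 1 ≤ p ∧ ∀ n, N ≤ n → w (n + p) = w n

/-- The `q`-power `u^q` of a finite word `u`, for a rational exponent `q ≥ 1`: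
`u^⌊q⌋` followed by the prefix of `u` of length `(q - ⌊q⌋)·|u|`. -/
def fracPow (u : List α) (q : ℚ) : List α :=
  (List.replicate ⌊q⌋.toNat u).flatten ++
    u.take (⌊q * (u.length : ℚ)⌋.toNat - ⌊q⌋.toNat * u.length)

/-- A nonempty word is primitive if it is not a (possibly fractional) `q`-power,
`q ≥ 2`, of any word. -/
def Primitive (v : List α) : Prop :=
  v ≠ [] ∧ ∀ (t : List α) (q : ℚ), 2 ≤ q → v ≠ fracPow t q

/-- `PowFactor u`: finite factors of `u^∞` together with finite factors of `(u^R)^∞`. -/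
def IsPowFactor (u t : List α) : Prop :=
  (∃ k, t <:+: (List.replicate k u).flatten) ∨ (∃ k, t <:+: (List.replicate k u.reverse).flatten)

/-- `(i,j)` is a `u`-run of the infinite word `w` (with the fixed parameter `γ`). -/
def IsRun (γ : ℕ) (w : ℕ → α) (u : List α) (i j : ℕ) : Prop :=
  i < j ∧ (γ - 2) * u.length ≤ j - i + 1 ∧ u.length + 1 < i ∧
  IsPowFactor u (Subword w (i - u.length) (j + u.length)) ∧
  ¬ IsPowFactor u (Subword w (i - u.length - 1) (j + u.length)) ∧
  ¬ IsPowFactor u (Subword w (i - u.length) (j + u.length + 1))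

/-- Membership in the set `Π_γ(w)`. -/
def InPi (γ : ℕ) (w : ℕ → α) (u : List α) : Prop :=
  Primitive u ∧ IsFactorI w u ∧
  ¬ IsPowFactor u ((List.range (γ * u.length)).map fun n => w (1 + n)) ∧
  ∃ v : List α, v.length = u.length ∧ IsPowFactor u v ∧
    RecurrentI w ((List.replicate γ v).flatten)

/-- Palindromic length: the minimal number of nonempty palindromes whose
concatenation equals `v`. -/
noncomputable def PL (v : List α) : ℕ :=
  sInf {k | ∃ ps : List (List α), ps.flatten = v ∧ ps.length = k ∧
    ∀ p ∈ ps, p ≠ [] ∧ p.reverse = p}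

/-- `maxPL v`: the maximum of `PL` over the factors of `v`. -/
noncomputable def maxPL (v : List α) : ℕ :=
  sSup {n | ∃ t, t <:+: v ∧ n = PL t}

/-- `(I, J, W, Z, D)` is the run factorization `factrz(w,u)` of `w`:
`(I k, J k)` enumerates the `u`-runs in increasing order, `W k` is the inter-run
factor, and `w[I k, J k] = (Z k)^(D k)`. -/
structure IsFactrz (γ : ℕ) (w : ℕ → α) (u : List α)
    (I J : ℕ → ℕ) (W Z : ℕ → List α) (D : ℕ → ℚ) : Prop where
  run : ∀ k, 1 ≤ k → IsRun γ w u (I k) (J k)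
  mono : ∀ k, 1 ≤ k → I k < I (k + 1)
  complete : ∀ i j, IsRun γ w u i j → ∃ k, 1 ≤ k ∧ I k = i ∧ J k = j
  j0 : J 0 = 0
  wdef : ∀ k, 1 ≤ k → W k = Subword w (J (k - 1) + 1) (I k - 1)
  zlen : ∀ k, 1 ≤ k → (Z k).length = u.length
  zpow : ∀ k, 1 ≤ k → IsPowFactor u (Z k)
  dge : ∀ k, 1 ≤ k → 1 ≤ D k
  zd : ∀ k, 1 ≤ k → Subword w (I k) (J k) = fracPow (Z k) (D k)

/-- Membership in `Φ_h` (with fixed parameter `γ`). -/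
def InPhi (γ h : ℕ) (φ : ℚ → ℚ) : Prop :=
  ∀ q : ℚ, 1 ≤ q → ((γ : ℚ) - 2 ≤ φ q ∧ φ q < (h : ℚ) ∧ ∃ n : ℕ, q - φ q = (n : ℚ))

/-- The finite prefix `W 1 (Z 1)^(E 1) ⋯ W k (Z k)^(E k)` of the reduced word. -/
def redPrefix (W Z : ℕ → List α) (E : ℕ → ℚ) : ℕ → List α
  | 0 => []
  | k + 1 => redPrefix W Z E k ++ W (k + 1) ++ fracPow (Z (k + 1)) (E (k + 1))

/-- `x` is the reduced word `W 1 (Z 1)^(E 1) W 2 (Z 2)^(E 2) ⋯` (1-indexed). -/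
def IsReduce (W Z : ℕ → List α) (E : ℕ → ℚ) (x : ℕ → α) : Prop :=
  ∀ k, redPrefix W Z E k = (List.range (redPrefix W Z E k).length).map fun n => x (1 + n)

/-- Position `i` of `w` is not covered by any `u`-run. -/
def RpoDom (γ : ℕ) (w : ℕ → α) (u : List α) (i : ℕ) : Prop :=
  1 ≤ i ∧ ∀ a b, IsRun γ w u a b → ¬ (a ≤ i ∧ i ≤ b)

/-- `κ(j) = Σ_{i ≤ j} (|W i| + |(Z i)^(D i)|)`, the end position of the `j`-th run. -/
def kappa (W Z : ℕ → List α) (D : ℕ → ℚ) (j : ℕ) : ℕ :=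
  ∑ i ∈ Finset.Icc 1 j, ((W i).length + (fracPow (Z i) (D i)).length)

/-- The graph of the position bijection `rpo`: position `i` of `w` (with exponent
sequence `D`) corresponds to position `ib` of the reduced word (exponents `E`). -/
def RpoRel (W Z : ℕ → List α) (D E : ℕ → ℚ) (i ib : ℕ) : Prop :=
  ∃ j, kappa W Z D j < i ∧ i ≤ kappa W Z D (j + 1) ∧
    ib = kappa W Z E j + (i - kappa W Z D j)

/-- There are at most `N` `u`-runs entirely contained in `[a,b]`. -/
def RunCountLe (γ : ℕ) (w : ℕ → α) (u : List α) (a b N : ℕ) : Prop :=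
  ∀ S : Finset (ℕ × ℕ), (∀ p ∈ S, IsRun γ w u p.1 p.2 ∧ a ≤ p.1 ∧ p.2 ≤ b) → S.card ≤ N

/-- `(i,j)` is a standard palindrome of `w` with respect to `u`. -/
def IsStdPal (γ : ℕ) (w : ℕ → α) (u : List α) (i j : ℕ) : Prop :=
  i ≤ j ∧ RpoDom γ w u i ∧ RpoDom γ w u j ∧
  (Subword w (i - 1) (j + 1)).reverse = Subword w (i - 1) (j + 1) ∧
  (∀ m, i - 1 ≤ m → m ≤ min (i + u.length - 1) j → RpoDom γ w u m) ∧
  (∀ m, max (j + 1 - u.length) i ≤ m → m ≤ j + 1 → RpoDom γ w u m) ∧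
  (∀ m, i ≤ m → m ≤ j → (RpoDom γ w u m ↔ RpoDom γ w u (i + j - m)))

/-- `(m1,m2)` is a centered standard palindrome of `w[i,j]`. -/
def IsCnStdPal (γ : ℕ) (w : ℕ → α) (u : List α) (i j m1 m2 : ℕ) : Prop :=
  IsStdPal γ w u m1 m2 ∧ i ≤ m1 ∧ m2 ≤ j ∧ m1 - i = j - m2


/-!
A factor of `u^∞` or `(uᴿ)^∞` is an interval on which `w` agrees with a shifted periodic
extension of `u` or `uᴿ`, and such an alignment is fixed by any window of length `|u|`. So two
`u`-runs whose `(|u| + 1)`-neighbourhoods meet merge into one power factor and, by maximality,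
coincide. Reflection in the palindrome `w[i, j]` maps power factors to power factors, hence runs
deep inside `w[i, j]` to runs. Let `(k, e)` be whichever of the run and its mirror starts first.
The margins of width `|u| + 1` outside `(k, e)` and its mirror are run-free, and every run meeting
`[k - |u|, k̄ + |u|]` is trapped between these two runs, so it is deep and its mirror is a run:
the run-free positions of that interval are symmetric.
-/

section Words

variable {w : ℕ → α} {u t s : List α} {a b a' b' i j m : ℕ}

lemma length_subword (w : ℕ → α) (a b : ℕ) : (Subword w a b).length = b + 1 - a := by
  simp [Subword]

lemma getElem?_subword (w : ℕ → α) (a b p : ℕ) :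
    (Subword w a b)[p]? = if p < b + 1 - a then some (w (a + p)) else none := by
  split_ifs with hp <;> simp [Subword, hp]

lemma subword_infix_subword (w : ℕ → α) (ha : a ≤ a') (hb : b' ≤ b) :
    Subword w a' b' <:+: Subword w a b := by
  have h : Subword w a' b' = ((Subword w a b).drop (a' - a)).take (b' + 1 - a') := by
    refine List.ext_getElem? fun p => ?_
    rw [List.getElem?_take, List.getElem?_drop, getElem?_subword, getElem?_subword]
    split_ifs <;> first | omega | rfl | (congr 2; omega)
  rw [h]
  exact (List.take_prefix _ _).isInfix.trans (List.drop_suffix _ _).isInfix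

lemma apply_eq_apply_sub_of_palindrome (hpal : (Subword w i j).reverse = Subword w i j)
    (him : i ≤ m) (hmj : m ≤ j) : w m = w (i + j - m) := by
  have h := congrArg (·[m - i]?) hpal
  rw [List.getElem?_reverse (by rw [length_subword]; omega), length_subword,
    getElem?_subword, getElem?_subword, if_pos (by omega), if_pos (by omega),
    show i + (j + 1 - i - 1 - (m - i)) = i + j - m by omega,
    show i + (m - i) = m by omega] at h
  exact (Option.some.inj h).symm

lemma reverse_subword_of_palindrome (hpal : (Subword w i j).reverse = Subword w i j)
    (hia : i ≤ a) (hbj : b ≤ j) (ha' : a' + b = i + j) (hb' : a + b' = i + j) :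
    (Subword w a b).reverse = Subword w a' b' := by
  refine List.ext_getElem? fun p => ?_
  by_cases hp : p < b + 1 - a
  · rw [List.getElem?_reverse (by rwa [length_subword]), length_subword, getElem?_subword,
      getElem?_subword, if_pos (by omega), if_pos (by omega),
      apply_eq_apply_sub_of_palindrome hpal (by omega) (by omega)]
    congr 2
    omega
  · rw [List.getElem?_eq_none (by rw [List.length_reverse, length_subword]; omega),
      getElem?_subword, if_neg (by omega)]

lemma IsPowFactor.infix (h : IsPowFactor u t) (hst : s <:+: t) : IsPowFactor u s :=
  h.imp (Exists.imp fun _ => hst.trans) (Exists.imp fun _ => hst.trans)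

lemma reverse_flatten_replicate (v : List α) (k : ℕ) :
    ((List.replicate k v).flatten).reverse = (List.replicate k v.reverse).flatten := by
  simp [List.reverse_flatten, List.map_replicate, List.reverse_replicate]

lemma IsPowFactor.reverse (h : IsPowFactor u t) : IsPowFactor u t.reverse := by
  rcases h with ⟨k, hk⟩ | ⟨k, hk⟩
  · exact Or.inr ⟨k, reverse_flatten_replicate u k ▸ hk.reverse⟩
  · refine Or.inl ⟨k, ?_⟩
    simpa only [reverse_flatten_replicate, List.reverse_reverse] using hk.reverse

lemma IsPowFactor.subword_mirror (hpal : (Subword w i j).reverse = Subword w i j)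
    (h : IsPowFactor u (Subword w a b)) (hia : i ≤ a) (hbj : b ≤ j)
    (ha' : a' + b = i + j) (hb' : a + b' = i + j) : IsPowFactor u (Subword w a' b') :=
  reverse_subword_of_palindrome hpal hia hbj ha' hb' ▸ h.reverse

end Words

lemma Function.Periodic.eq_of_eqOn_Ico {β : Type*} {f g : ℕ → β} {L c : ℕ}
    (hf : Function.Periodic f L) (hg : Function.Periodic g L) (hL : 0 < L)
    (h : Set.EqOn f g (Set.Ico c (c + L))) : f = g := by
  have hshift : ∀ x, f (x + c) = g (x + c) := fun x => by
    have hf' : Function.Periodic (fun y => f (y + c)) L := fun y => by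
      simpa only [add_right_comm] using hf (y + c)
    have hg' : Function.Periodic (fun y => g (y + c)) L := fun y => by
      simpa only [add_right_comm] using hg (y + c)
    rw [← hf'.map_mod_nat, ← hg'.map_mod_nat]
    exact h ⟨by omega, by have := Nat.mod_lt x hL; omega⟩
  funext n
  have hcL : c ≤ n + c * L := le_add_left (Nat.le_mul_of_pos_right c hL)
  have hfn := hf.nat_mul c n
  have hgn := hg.nat_mul c n
  rw [Nat.cast_id] at hfn hgn
  rw [← hfn, ← hgn, ← Nat.sub_add_cancel hcL, hshift]

section Alignment

variable {w : ℕ → α} {u v v' : List α} {a b c d a' b' r r' k : ℕ}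

def AlignedOn (v : List α) (r : ℕ) (w : ℕ → α) (a b : ℕ) : Prop :=
  ∀ m, a ≤ m → m ≤ b → v[(r + m) % v.length]? = some (w m)

lemma getElem?_flatten_replicate (v : List α) {k p : ℕ} (hp : p < k * v.length) :
    (List.replicate k v).flatten[p]? = v[p % v.length]? := by
  induction k generalizing p with
  | zero => omega
  | succ k ih =>
    rw [List.replicate_succ, List.flatten_cons, List.getElem?_append]
    split_ifs with hpv
    · rw [Nat.mod_eq_of_lt hpv]
    · rw [ih (by rw [Nat.succ_mul] at hp; omega), ← Nat.mod_eq_sub_mod (by omega)]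

lemma alignedOn_of_infix (hv : v ≠ []) (h : Subword w a b <:+: (List.replicate k v).flatten) :
    ∃ r, AlignedOn v r w a b := by
  obtain ⟨s, t, hst⟩ := h
  have hlen := congrArg List.length hst
  simp only [List.length_append, List.length_flatten, List.map_replicate, List.sum_replicate,
    length_subword, smul_eq_mul] at hlen
  have hL : 0 < v.length := List.length_pos_iff.mpr hv
  -- the offset `s.length` at position `a` becomes `s.length + a * (|v| - 1)` at position `0`
  refine ⟨s.length + a * (v.length - 1), fun m ham hmb => ?_⟩
  have hidx : s.length + (m - a) < k * v.length := by omega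
  have hw : (List.replicate k v).flatten[s.length + (m - a)]? = some (w m) := by
    rw [← hst, List.append_assoc, List.getElem?_append_right (by omega), Nat.add_sub_cancel_left,
      List.getElem?_append_left (by rw [length_subword]; omega), getElem?_subword,
      if_pos (by omega), Nat.add_sub_cancel' ham]
  have hmod : s.length + a * (v.length - 1) + m = s.length + (m - a) + a * v.length := by
    have : a ≤ a * v.length := Nat.le_mul_of_pos_right a hL
    rw [Nat.mul_sub_one]
    omega
  rw [hmod, Nat.add_mul_mod_self_right, ← getElem?_flatten_replicate v hidx, hw]

lemma AlignedOn.infix (hv : v ≠ []) (h : AlignedOn v r w a b) :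
    Subword w a b <:+: (List.replicate (r + a + (b + 1 - a)) v).flatten := by
  have hL : 0 < v.length := List.length_pos_iff.mpr hv
  have hk : r + a + (b + 1 - a) ≤ (r + a + (b + 1 - a)) * v.length :=
    Nat.le_mul_of_pos_right _ hL
  have heq : Subword w a b =
      ((List.replicate (r + a + (b + 1 - a)) v).flatten.drop (r + a)).take (b + 1 - a) := by
    refine List.ext_getElem? fun p => ?_
    rw [getElem?_subword, List.getElem?_take]
    split_ifs with hp
    · rw [List.getElem?_drop, getElem?_flatten_replicate v (by omega), add_assoc,
        h (a + p) (by omega) (by omega)]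
    · rfl
  rw [heq]
  exact (List.take_prefix _ _).isInfix.trans (List.drop_suffix _ _).isInfix

/-- An alignment is determined by any window of length `|v|`. -/
lemma AlignedOn.transfer (hv : v ≠ []) (hlen : v'.length = v.length)
    (h : AlignedOn v r w a b) (h' : AlignedOn v' r' w a' b')
    (hac : a ≤ c) (ha'c : a' ≤ c) (hcb : c + v.length ≤ b + 1) (hcb' : c + v.length ≤ b' + 1) :
    AlignedOn v r w a' b' := by
  have hL : 0 < v.length := List.length_pos_iff.mpr hv
  have hper : ∀ (x : List α) (q : ℕ), x.length = v.length →
      Function.Periodic (fun m => x[(q + m) % x.length]?) v.length := fun x q hx m => by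
    simp only [hx, ← add_assoc, Nat.add_mod_right]
  have hfg := (hper v r rfl).eq_of_eqOn_Ico (hper v' r' hlen) hL (c := c) fun m ⟨hcm, hmc⟩ => by
    rw [h m (by omega) (by omega), h' m (by omega) (by omega)]
  intro m hm hm'
  rw [congrFun hfg m]
  exact h' m hm hm'

lemma AlignedOn.union (h : AlignedOn v r w a b) (h' : AlignedOn v r w c d) (hcb : c ≤ b + 1) :
    AlignedOn v r w a (max b d) := fun m ham hmb => by
  by_cases hm : m ≤ b
  · exact h m ham hm
  · exact h' m (by omega) (by omega)

lemma isPowFactor_subword_iff (hu : u ≠ []) :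
    IsPowFactor u (Subword w a b) ↔ ∃ v ∈ [u, u.reverse], ∃ r, AlignedOn v r w a b := by
  have hu' : u.reverse ≠ [] := List.reverse_ne_nil_iff.mpr hu
  constructor
  · rintro (⟨k, hk⟩ | ⟨k, hk⟩)
    · exact ⟨u, by simp, alignedOn_of_infix hu hk⟩
    · exact ⟨u.reverse, by simp, alignedOn_of_infix hu' hk⟩
  · rintro ⟨v, hv, r, hr⟩
    rcases List.mem_pair.mp hv with rfl | rfl
    · exact Or.inl ⟨_, hr.infix hu⟩
    · exact Or.inr ⟨_, hr.infix hu'⟩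

lemma IsPowFactor.subword_union (hu : u ≠ []) (h : IsPowFactor u (Subword w a b))
    (h' : IsPowFactor u (Subword w c d)) (hac : a ≤ c) (hcb : c + u.length ≤ b + 1)
    (hcd : c + u.length ≤ d + 1) : IsPowFactor u (Subword w a (max b d)) := by
  obtain ⟨v, hv, r, hr⟩ := (isPowFactor_subword_iff hu).mp h
  obtain ⟨v', hv', r', hr'⟩ := (isPowFactor_subword_iff hu).mp h'
  have hlen : ∀ x ∈ [u, u.reverse], x.length = u.length := by simp
  have hv0 : v ≠ [] := List.length_pos_iff.mp (hlen v hv ▸ List.length_pos_iff.mpr hu)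
  have hcd' := hr.transfer hv0 ((hlen v' hv').trans (hlen v hv).symm) hr' hac le_rfl
    (by rw [hlen v hv]; omega) (by rw [hlen v hv]; omega)
  exact (isPowFactor_subword_iff hu).mpr ⟨v, hv, r, hr.union hcd' (by omega)⟩

end Alignment

section Runs

variable {γ : ℕ} {w : ℕ → α} {u : List α} {a b c d e i j k p s : ℕ}

lemma IsRun.eq_of_le_of_le (hu : u ≠ []) (h : IsRun γ w u a b) (h' : IsRun γ w u c d)
    (hac : a ≤ c) (hcb : c ≤ b + u.length + 1) : a = c ∧ b = d := by
  obtain ⟨hab, -, ha, hw, -, hr⟩ := h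
  obtain ⟨hcd, -, hc, hw', hl', hr'⟩ := h'
  have hn : 0 < u.length := List.length_pos_iff.mpr hu
  have hM := hw.subword_union hu hw' (by omega) (by omega) (by omega)
  have hsub : ∀ {a' b'}, a - u.length ≤ a' → b' ≤ max (b + u.length) (d + u.length) →
      IsPowFactor u (Subword w a' b') := fun ha' hb' =>
    hM.infix (subword_infix_subword w ha' hb')
  have hac' : a = c := by
    by_contra hne
    exact hl' (hsub (by omega) (by omega))
  refine ⟨hac', ?_⟩
  rcases lt_trichotomy b d with hbd | hbd | hdb
  · exact absurd (hsub le_rfl (by omega)) hr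
  · exact hbd
  · exact absurd (hsub (by omega) (by omega)) hr'

lemma IsRun.eq_of_near (hu : u ≠ []) (h : IsRun γ w u a b) (h' : IsRun γ w u c d)
    (hcb : c ≤ b + u.length + 1) (had : a ≤ d + u.length + 1) : a = c ∧ b = d := by
  rcases le_total a c with hac | hca
  · exact h.eq_of_le_of_le hu h' hac hcb
  · obtain ⟨hca', hdb⟩ := h'.eq_of_le_of_le hu h hca had
    exact ⟨hca'.symm, hdb.symm⟩

lemma IsRun.le_start_of_near (hu : u ≠ []) (h : IsRun γ w u k e) (h' : IsRun γ w u a b)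
    (hkb : k ≤ b + u.length + 1) : k ≤ a := by
  by_contra hak
  have := (h'.eq_of_near hu h hkb (by have := h.1; omega)).1
  omega

lemma IsRun.end_le_of_near (hu : u ≠ []) (h : IsRun γ w u s e) (h' : IsRun γ w u a b)
    (hae : a ≤ e + u.length + 1) : b ≤ e := by
  by_contra heb
  have := (h'.eq_of_near hu h (by have := h.1; omega) hae).2
  omega

lemma IsRun.rpoDom_of_lt (hu : u ≠ []) (h : IsRun γ w u k e) (hkp : k ≤ p + u.length + 1)
    (hpk : p < k) : RpoDom γ w u p := by
  refine ⟨by have := h.2.2.1; omega, fun a b h' ⟨hap, hpb⟩ => ?_⟩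
  have := h.le_start_of_near hu h' (by omega)
  omega

lemma IsRun.rpoDom_of_gt (hu : u ≠ []) (h : IsRun γ w u s e) (hep : e < p)
    (hpe : p ≤ e + u.length + 1) : RpoDom γ w u p := by
  refine ⟨by omega, fun a b h' ⟨hap, hpb⟩ => ?_⟩
  have := h.end_le_of_near hu h' (by omega)
  omega

lemma IsRun.mirror
    (hpre : ¬ IsPowFactor u ((List.range (γ * u.length)).map fun n => w (1 + n)))
    (hpal : (Subword w i j).reverse = Subword w i j) (h : IsRun γ w u a b)
    (hia : i + u.length < a) (hbj : b + u.length < j) :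
    IsRun γ w u (i + j - b) (i + j - a) := by
  obtain ⟨hab, hlen, -, hw, hl, hr⟩ := h
  have hw' : IsPowFactor u (Subword w (i + j - b - u.length) (i + j - a + u.length)) :=
    hw.subword_mirror hpal (by omega) (by omega) (by omega) (by omega)
  refine ⟨by omega, by rwa [show i + j - a - (i + j - b) + 1 = b - a + 1 by omega], ?_, hw',
    fun hl' => hr (hl'.subword_mirror hpal (by omega) (by omega) (by omega) (by omega)),
    fun hr' => hl (hr'.subword_mirror hpal (by omega) (by omega) (by omega) (by omega))⟩
  -- otherwise `i = 0` and the mirrored run would make the prefix of length `γ|u|` a power factor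
  by_contra hle
  have hγ : γ * u.length ≤ (γ - 2) * u.length + 2 * u.length := by
    rw [← add_mul]
    exact Nat.mul_le_mul_right _ (by omega)
  apply hpre
  rw [show ((List.range (γ * u.length)).map fun n => w (1 + n)) = Subword w 1 (γ * u.length) by
    simp [Subword]]
  exact hw'.infix (subword_infix_subword w (by omega) (by omega))

end Runs

section CenteredPalindrome

variable {γ : ℕ} {w : ℕ → α} {u : List α} {i j k e m : ℕ}

lemma rpoDom_mirror_of_isRun (hu : u ≠ [])
    (hpre : ¬ IsPowFactor u ((List.range (γ * u.length)).map fun n => w (1 + n)))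
    (hpal : (Subword w i j).reverse = Subword w i j) (h : IsRun γ w u k e)
    (hik : i + u.length < k) (hej : e + u.length < j)
    (hkm : k ≤ m + u.length) (hmk : m ≤ i + j - k + u.length) (hm : RpoDom γ w u m) :
    RpoDom γ w u (i + j - m) := by
  have hmir := h.mirror hpre hpal hik hej
  have hke := h.1
  refine ⟨by omega, fun a b h' ⟨ha, hb⟩ => ?_⟩
  have hka := h.le_start_of_near hu h' (by omega)
  have hbk := hmir.end_le_of_near hu h' (by omega)
  exact hm.2 _ _ (h'.mirror hpre hpal (by omega) (by omega)) ⟨by omega, by omega⟩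

lemma isCnStdPal_of_isRun (hu : u ≠ [])
    (hpre : ¬ IsPowFactor u ((List.range (γ * u.length)).map fun n => w (1 + n)))
    (hpal : (Subword w i j).reverse = Subword w i j) (h : IsRun γ w u k e)
    (hik : i + u.length < k) (hej : e + u.length < j) (hke : k ≤ i + j - e) :
    IsCnStdPal γ w u i j (k - u.length) (i + j - k + u.length) := by
  have hn : 0 < u.length := List.length_pos_iff.mpr hu
  have hmir := h.mirror hpre hpal hik hej
  have hsym := fun m => rpoDom_mirror_of_isRun (m := m) hu hpre hpal h hik hej
  have hke' := h.1
  refine ⟨⟨by omega, h.rpoDom_of_lt hu (by omega) (by omega),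
    hmir.rpoDom_of_gt hu (by omega) (by omega),
    reverse_subword_of_palindrome hpal (by omega) (by omega) (by omega) (by omega),
    fun m hm hm' => h.rpoDom_of_lt hu (by omega) (by omega),
    fun m hm hm' => hmir.rpoDom_of_gt hu (by omega) hm', fun m hm hm' => ?_⟩,
    by omega, by omega, by omega⟩
  rw [show k - u.length + (i + j - k + u.length) - m = i + j - m by omega]
  refine ⟨hsym m (by omega) (by omega), fun hm'' => ?_⟩
  simpa [show i + j - (i + j - m) = m by omega] using hsym (i + j - m) (by omega) (by omega) hm''

end CenteredPalindrome

theorem run_gives_centered_stdpal_general {α : Type*} (γ : ℕ)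
    (w : ℕ → α) (u : List α) (hu : InPi γ w u)
    (i j m1 m2 m3 k kb : ℕ)
    (hpal : (Subword w i j).reverse = Subword w i j)
    (hrun : IsRun γ w u m1 m2)
    (h1 : i + u.length < m1) (h2 : m2 + u.length < j)
    (hm3 : m3 = i + j - m2)
    (hk : k = min m1 m3) (hkb : kb = i + j - k) :
    IsCnStdPal γ w u i j (k - u.length) (kb + u.length) := by
  obtain ⟨⟨hne, -⟩, -, hpre, -⟩ := hu
  subst hkb hk hm3
  rcases le_total m1 (i + j - m2) with hle | hle
  · rw [min_eq_left hle]
    exact isCnStdPal_of_isRun hne hpre hpal hrun h1 h2 hle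
  · rw [min_eq_right hle]
    exact isCnStdPal_of_isRun hne hpre hpal (hrun.mirror hpre hpal h1 h2)
      (by omega) (by omega) (by omega)

/-- a run deep inside a palindrome produces a centered standard
palindrome. -/
theorem run_gives_centered_stdpal {α : Type*} (γ : ℕ) (hγ : 3 ≤ γ)
    (w : ℕ → α) (u : List α) (hw : ¬ UltimatelyPeriodic w) (hu : InPi γ w u)
    (i j m1 m2 m3 m4 k kb : ℕ) (hij : i ≤ j)
    (hpal : (Subword w i j).reverse = Subword w i j)
    (hrun : IsRun γ w u m1 m2)
    (h1 : i + u.length < m1) (h2 : m2 + u.length < j)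
    (hm3 : m3 = i + j - m2) (hm4 : m4 = i + j - m1)
    (hk : k = min m1 m3) (hkb : kb = i + j - k) :
    IsCnStdPal γ w u i j (k - u.length) (kb + u.length) :=
  run_gives_centered_stdpal_general γ w u hu i j m1 m2 m3 k kb hpal hrun h1 h2 hm3 hk hkb
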